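/- The endomorphism W has three pairwise distinct eigenvalues if and only if σ·(9Ω² - 4σ) ≠ 0. (The algebraic content of case (v) of Theorem 4 of the paper: a space-time admitting a 2+2 umbilical structure is of Petrov–Bel type I exactly when (𝒵,𝒵)·(9Ω² - 4(𝒵,𝒵)) ≠ 0.) -/

import Mathlib

open Module LinearMap

noncomputable section

/-- The endomorphism `W(x) := 3Ω·B(u,x)·u + Ω·x + B(u,x)·z + B(z,x)·u` of `V`,
representing the self-dual Weyl tensor `𝒲 = 3Ω·𝒰⊗𝒰 + Ω·𝒢 + 𝒰⊗̃𝒵` of a space-time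
admitting a 2+2 umbilical structure acting on self-dual bivectors. -/
def Wmap {V : Type*} [AddCommGroup V] [Module ℂ V]
    (B : LinearMap.BilinForm ℂ V) (Ω : ℂ) (u z : V) : V →ₗ[ℂ] V :=
  (3 * Ω) • (B u).smulRight u + Ω • LinearMap.id + (B u).smulRight z + (B z).smulRight u

end

/-!
Eigenvectors with `B(u,x) = B(z,x) = 0` (they exist since `dim V = 3`) have eigenvalue `Ω`;
for any other eigenvector, pairing `W x = λ x` with `u` and `z` shows that `λ` is a root of
`λ² + Ωλ + σ - 2Ω²`, and conversely every root `λ` of that quadratic has the eigenvector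
`(Ω - λ) u + z` once `σ ≠ 0`. So the eigenvalues are the roots of
`(λ - Ω)(λ² + Ωλ + σ - 2Ω²)`, which are pairwise distinct exactly when `Ω` is not a root of the
quadratic (`σ ≠ 0`) and its discriminant `9Ω² - 4σ` is nonzero.
-/

/-- The characteristic polynomial of `Wmap B Ω u z`, up to sign, with `σ = B(z,z)`. -/
def weylCubic (Ω σ t : ℂ) : ℂ := (t - Ω) * (t ^ 2 + Ω * t + σ - 2 * Ω ^ 2)

lemma not_three_distinct_of_forall_eq_or_eq {α : Type*} {P : α → Prop} {p q : α}
    (h : ∀ t, P t → t = p ∨ t = q) :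
    ¬ ∃ a b c : α, a ≠ b ∧ a ≠ c ∧ b ≠ c ∧ P a ∧ P b ∧ P c := by
  rintro ⟨a, b, c, hab, hac, hbc, ha, hb, hc⟩
  rcases h a ha with rfl | rfl <;> rcases h b hb with rfl | rfl <;>
    rcases h c hc with rfl | rfl <;> simp_all

lemma exists_three_distinct_roots_weylCubic_iff (Ω σ : ℂ) :
    (∃ a b c : ℂ, a ≠ b ∧ a ≠ c ∧ b ≠ c ∧
        weylCubic Ω σ a = 0 ∧ weylCubic Ω σ b = 0 ∧ weylCubic Ω σ c = 0)
      ↔ σ * (9 * Ω ^ 2 - 4 * σ) ≠ 0 := by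
  constructor
  · intro h hσ
    rcases mul_eq_zero.mp hσ with hσ | hdisc
    · refine not_three_distinct_of_forall_eq_or_eq (p := Ω) (q := -2 * Ω) (fun t ht ↦ ?_) h
      have hfactor : (t - Ω) ^ 2 * (t + 2 * Ω) = 0 := by
        unfold weylCubic at ht
        linear_combination ht - (t - Ω) * hσ
      rcases mul_eq_zero.mp hfactor with h | h
      · exact .inl (sub_eq_zero.mp (pow_eq_zero_iff two_ne_zero |>.mp h))
      · exact .inr (by linear_combination h)
    · refine not_three_distinct_of_forall_eq_or_eq (p := Ω) (q := -Ω / 2) (fun t ht ↦ ?_) h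
      have hfactor : (t - Ω) * (2 * t + Ω) ^ 2 = 0 := by
        unfold weylCubic at ht
        linear_combination 4 * ht + (t - Ω) * hdisc
      rcases mul_eq_zero.mp hfactor with h | h
      · exact .inl (sub_eq_zero.mp h)
      · exact .inr (by linear_combination (pow_eq_zero_iff two_ne_zero |>.mp h) / 2)
  · intro h
    have hσ : σ ≠ 0 := left_ne_zero_of_mul h
    obtain ⟨s, hs⟩ := IsAlgClosed.exists_pow_nat_eq (9 * Ω ^ 2 - 4 * σ) two_pos
    have hs0 : s ≠ 0 := by rintro rfl; exact right_ne_zero_of_mul h (by rw [← hs]; ring)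
    have quadratic_root_ne : ∀ t, t ^ 2 + Ω * t + σ - 2 * Ω ^ 2 = 0 → t ≠ Ω := by
      rintro t ht rfl
      exact hσ (by linear_combination ht)
    have hplus : ((-Ω + s) / 2) ^ 2 + Ω * ((-Ω + s) / 2) + σ - 2 * Ω ^ 2 = 0 := by
      linear_combination hs / 4
    have hminus : ((-Ω - s) / 2) ^ 2 + Ω * ((-Ω - s) / 2) + σ - 2 * Ω ^ 2 = 0 := by
      linear_combination hs / 4
    refine ⟨(-Ω + s) / 2, (-Ω - s) / 2, Ω, fun h ↦ hs0 (by linear_combination h),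
      quadratic_root_ne _ hplus, quadratic_root_ne _ hminus, ?_, ?_, ?_⟩ <;>
      simp [weylCubic, hplus, hminus]

section Wmap

variable {V : Type*} [AddCommGroup V] [Module ℂ V] {B : LinearMap.BilinForm ℂ V} {Ω : ℂ}
  {u z : V}

lemma Wmap_apply (B : LinearMap.BilinForm ℂ V) (Ω : ℂ) (u z x : V) :
    Wmap B Ω u z x = Ω • x + (3 * Ω * B u x + B z x) • u + B u x • z := by
  simp only [Wmap, LinearMap.add_apply, LinearMap.smul_apply, smulRight_apply, id_apply]
  module

lemma weylCubic_eq_zero_of_hasEigenvalue (hBsym : ∀ x y, B x y = B y x) (hu : B u u = -1)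
    (huz : B u z = 0) {t : ℂ} (ht : Module.End.HasEigenvalue (Wmap B Ω u z) t) :
    weylCubic Ω (B z z) t = 0 := by
  obtain ⟨x, hx, hx0⟩ := ht.exists_hasEigenvector
  have hWx : Wmap B Ω u z x = t • x := Module.End.mem_eigenspace_iff.mp hx
  have hzu : B z u = 0 := (hBsym z u).trans huz
  have pair_u : t * B u x + 2 * Ω * B u x + B z x = 0 := by
    have h := congrArg (B u) hWx
    simp only [Wmap_apply, map_add, map_smul, hu, huz, smul_eq_mul] at h
    linear_combination -h
  have pair_z : t * B z x - Ω * B z x - B z z * B u x = 0 := by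
    have h := congrArg (B z) hWx
    simp only [Wmap_apply, map_add, map_smul, hzu, smul_eq_mul] at h
    linear_combination -h
  by_cases hux : B u x = 0
  · have hzx : B z x = 0 := by linear_combination pair_u - (t + 2 * Ω) * hux
    have hΩx : Wmap B Ω u z x = Ω • x := by simp [Wmap_apply, hux, hzx]
    have ht : t = Ω := smul_left_injective ℂ hx0 (hWx.symm.trans hΩx)
    simp [weylCubic, ht]
  · have h : (t ^ 2 + Ω * t + B z z - 2 * Ω ^ 2) * B u x = 0 := by
      linear_combination (t - Ω) * pair_u - pair_z
    simp [weylCubic, (mul_eq_zero.mp h).resolve_right hux]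

lemma hasEigenvalue_Wmap_of_quadratic (hBsym : ∀ x y, B x y = B y x) (hu : B u u = -1)
    (huz : B u z = 0) (hσ : B z z ≠ 0) {t : ℂ}
    (ht : t ^ 2 + Ω * t + B z z - 2 * Ω ^ 2 = 0) :
    Module.End.HasEigenvalue (Wmap B Ω u z) t := by
  have hzu : B z u = 0 := (hBsym z u).trans huz
  set v : V := (Ω - t) • u + z
  have huv : B u v = t - Ω := by simp [v, hu, huz]
  have hzv : B z v = B z z := by simp [v, hzu]
  have hv0 : v ≠ 0 := by
    intro hv
    rw [hv, map_zero] at huv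
    obtain rfl : t = Ω := (sub_eq_zero.mp huv.symm)
    exact hσ (by linear_combination ht)
  have hWv : Wmap B Ω u z v = t • v := by
    rw [Wmap_apply, huv, hzv]
    match_scalars
    · linear_combination ht
    · ring
  exact Module.End.hasEigenvalue_of_hasEigenvector ⟨Module.End.mem_eigenspace_iff.mpr hWv, hv0⟩

lemma hasEigenvalue_Wmap_self [FiniteDimensional ℂ V] (hdim : 2 < finrank ℂ V) :
    Module.End.HasEigenvalue (Wmap B Ω u z) Ω := by
  have hker : ker ((B u).prod (B z)) ≠ ⊥ :=
    ker_ne_bot_of_finrank_lt (by simpa using hdim)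
  obtain ⟨x, hx, hx0⟩ := (Submodule.ne_bot_iff _).mp hker
  have hux : B u x = 0 := congrArg Prod.fst hx
  have hzx : B z x = 0 := congrArg Prod.snd hx
  have hWx : Wmap B Ω u z x = Ω • x := by simp [Wmap_apply, hux, hzx]
  exact Module.End.hasEigenvalue_of_hasEigenvector ⟨Module.End.mem_eigenspace_iff.mpr hWx, hx0⟩

lemma hasEigenvalue_Wmap_iff [FiniteDimensional ℂ V] (hdim : 2 < finrank ℂ V)
    (hBsym : ∀ x y, B x y = B y x) (hu : B u u = -1) (huz : B u z = 0) (hσ : B z z ≠ 0)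
    {t : ℂ} : Module.End.HasEigenvalue (Wmap B Ω u z) t ↔ weylCubic Ω (B z z) t = 0 := by
  refine ⟨weylCubic_eq_zero_of_hasEigenvalue hBsym hu huz, fun ht ↦ ?_⟩
  rcases mul_eq_zero.mp ht with ht | ht
  · exact sub_eq_zero.mp ht ▸ hasEigenvalue_Wmap_self hdim
  · exact hasEigenvalue_Wmap_of_quadratic hBsym hu huz hσ ht

end Wmap

theorem typeI_characterization_general
    {V : Type*} [AddCommGroup V] [Module ℂ V] [FiniteDimensional ℂ V]
    (hdim : finrank ℂ V = 3)
    (B : LinearMap.BilinForm ℂ V) (hBsym : ∀ x y, B x y = B y x)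
    (Ω : ℂ) (u z : V) (hu : B u u = -1) (huz : B u z = 0) :
    (∃ a b c : ℂ, a ≠ b ∧ a ≠ c ∧ b ≠ c ∧
        Module.End.HasEigenvalue (Wmap B Ω u z) a ∧
        Module.End.HasEigenvalue (Wmap B Ω u z) b ∧
        Module.End.HasEigenvalue (Wmap B Ω u z) c)
      ↔ B z z * (9 * Ω ^ 2 - 4 * B z z) ≠ 0 := by
  rw [← exists_three_distinct_roots_weylCubic_iff]
  constructor
  · rintro ⟨a, b, c, hab, hac, hbc, ha, hb, hc⟩
    exact ⟨a, b, c, hab, hac, hbc, weylCubic_eq_zero_of_hasEigenvalue hBsym hu huz ha,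
      weylCubic_eq_zero_of_hasEigenvalue hBsym hu huz hb,
      weylCubic_eq_zero_of_hasEigenvalue hBsym hu huz hc⟩
  · intro hroots
    have hσ : B z z ≠ 0 :=
      left_ne_zero_of_mul ((exists_three_distinct_roots_weylCubic_iff Ω _).mp hroots)
    simpa only [hasEigenvalue_Wmap_iff (by omega) hBsym hu huz hσ] using hroots

/-- Theorem 4, case (v), type I: `W` has three pairwise distinct
eigenvalues if and only if `σ·(9Ω² - 4σ) ≠ 0`, where `σ := B(z,z)`. -/
theorem typeI_characterization
    {V : Type*} [AddCommGroup V] [Module ℂ V] [FiniteDimensional ℂ V]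
    (hdim : finrank ℂ V = 3)
    (B : LinearMap.BilinForm ℂ V) (hBsym : ∀ x y, B x y = B y x)
    (hBnd : B.Nondegenerate)
    (Ω : ℂ) (u z : V) (hu : B u u = -1) (huz : B u z = 0) :
    (∃ a b c : ℂ, a ≠ b ∧ a ≠ c ∧ b ≠ c ∧
        Module.End.HasEigenvalue (Wmap B Ω u z) a ∧
        Module.End.HasEigenvalue (Wmap B Ω u z) b ∧
        Module.End.HasEigenvalue (Wmap B Ω u z) c)
      ↔ B z z * (9 * Ω ^ 2 - 4 * B z z) ≠ 0 :=
  typeI_characterization_general hdim B hBsym Ω u z hu huz
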